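/- Let K be a commutative ring, A an m×m matrix over K, B an n×m matrix and C an m×n matrix over K. Write det(x·I_n + B·C) = Σ_{i=0}^{n} x^{n-i} p_i, det(x·I_m + A) = Σ_{i=0}^{m} x^{m-i} q_i, and Σ_{P ∈ P_m} Σ_{Q ∈ Q_m} det(x·I_n + B·(QP)·A·(QP)^{-1}·C) = Σ_{i=0}^{n} x^{n-i} r_i in K[x]. Then for all 0 ≤ k ≤ n (with k ≤ m), r_k = 2^m · k! · (m−k)! · p_k · q_k, where 2^m, k! and (m−k)! denote the images of these natural numbers in K. -/

import Mathlib

/-!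
The coefficient of `x ^ (n - k)` in `det (x • 1 + N)` is the sum `principalMinorSum N k` of the
principal `k × k` minors of `N`. By Cauchy–Binet, the principal minor of `B * W * C` on rows `S`
is `∑ f g : S ↪ Fin m, (∏ B s (f s)) * (∏ W (f s) (g s)) * det (C.submatrix g S)`. For
`W = Q P A P⁻¹ Q` the sign matrix `Q` contributes the product of its signs over `range f` times
that over `range g`, and summed over all `Q` this gives `2 ^ m` or `0` according as the two
ranges agree. Then `g = f ∘ π`, and the sum over `π` reassembles `det A[σ f, σ f] * det C[f, S]`.
Summing over `σ`, every embedding `σ ∘ f` is reached `(m - k)!` times and every `k`-subset is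
the range of `k!` embeddings, which yields `(m - k)! * k! * principalMinorSum A k`; what is left
of the sum over `f` is Cauchy–Binet again, for `det (B * C)[S, S]`.
-/

open Polynomial

/-- The sign (diagonal `±1`) matrix determined by `ε : Fin m → Bool`. -/
def signMatrix (K : Type*) [CommRing K] {m : ℕ} (ε : Fin m → Bool) :
    Matrix (Fin m) (Fin m) K :=
  Matrix.diagonal (fun i => if ε i then 1 else -1)

section

open Matrix Finset

variable {R : Type*} [CommRing R]

section PrincipalMinors

variable {n : Type*} [Fintype n] [DecidableEq n]

def principalMinorSum (M : Matrix n n R) (k : ℕ) : R :=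
  ∑ s ∈ univ.powersetCard k, (M.submatrix (Subtype.val : s → n) Subtype.val).det

theorem coeff_det_X_smul_one_add_map (M : Matrix n n R) {k : ℕ} (hk : k ≤ Fintype.card n) :
    (det ((X : R[X]) • (1 : Matrix n n R[X]) + M.map C)).coeff (Fintype.card n - k) =
      principalMinorSum M k := by
  have hcharpoly : det ((X : R[X]) • (1 : Matrix n n R[X]) + M.map C) = (-M).charpoly := by
    rw [charpoly, charmatrix, RingHom.mapMatrix_apply, Matrix.map_neg _ (map_neg C),
      sub_neg_eq_add, smul_one_eq_diagonal, scalar_apply]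
  rw [hcharpoly, charpoly_coeff_eq_sum_minors _ _ hk, principalMinorSum, mul_sum]
  refine sum_congr rfl fun s hs => ?_
  simp only [submatrix_neg, Pi.neg_apply, det_neg, Fintype.card_coe, (mem_powersetCard.mp hs).2]
  rw [← mul_assoc, ← mul_pow, neg_one_mul, neg_neg, one_pow, one_mul]

end PrincipalMinors

theorem coeff_sum_X_pow_sub_mul_C (c : ℕ → R) {s k : ℕ} (hk : k ≤ s) :
    (∑ i ∈ range (s + 1), X ^ (s - i) * C (c i)).coeff (s - k) = c k := by
  simp only [finsetSum_coeff, X_pow_mul, coeff_C_mul_X_pow]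
  rw [sum_eq_single_of_mem k (mem_range.mpr (by omega)) fun i hi hik => if_neg (by
    rw [mem_range] at hi; omega), if_pos rfl]

section CauchyBinet

variable {α ι : Type*} [Fintype α] [DecidableEq α] [Fintype ι]

/-- The Cauchy–Binet formula, with the `k`-subsets of `ι` replaced by the embeddings `α ↪ ι`. -/
theorem det_mul_eq_sum_embedding (U : Matrix α ι R) (V : Matrix ι α R) :
    det (U * V) = ∑ f : α ↪ ι, (∏ i, U i (f i)) * det (V.submatrix f id) := by
  have hrows : U * V = Matrix.of fun i => ∑ j, U i j • V j := by
    ext i j; simp [mul_apply]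
  have hfun : det (U * V) = ∑ f : α → ι, (∏ i, U i (f i)) * det (V.submatrix f id) := by
    rw [hrows]
    refine (detRowAlternating.toMultilinearMap.map_sum fun i j => U i j • V j).trans ?_
    refine sum_congr rfl fun f _ => ?_
    exact (detRowAlternating.toMultilinearMap.map_smul_univ _ _).trans (smul_eq_mul _ _)
  rw [hfun, ← sum_subset (subset_univ (univ.map ⟨_, DFunLike.coe_injective (F := α ↪ ι)⟩)),
    sum_map]
  · rfl
  intro f _ hf
  obtain ⟨i, j, hij, hne⟩ := Function.not_injective_iff.mp fun hinj =>
    hf (mem_map.mpr ⟨⟨f, hinj⟩, mem_univ _, rfl⟩)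
  rw [det_zero_of_row_eq hne (by ext; simp [hij]), mul_zero]

theorem det_mul_mul_eq_sum_embedding (U : Matrix α ι R) (W : Matrix ι ι R) (V : Matrix ι α R) :
    det (U * W * V) = ∑ f : α ↪ ι, ∑ g : α ↪ ι,
      (∏ i, U i (f i)) * (∏ i, W (f i) (g i)) * det (V.submatrix g id) := by
  rw [Matrix.mul_assoc, det_mul_eq_sum_embedding]
  refine sum_congr rfl fun f _ => ?_
  rw [submatrix_mul _ _ _ _ _ Function.bijective_id, submatrix_id_id, det_mul_eq_sum_embedding,
    mul_sum]
  simp only [submatrix_apply, id, mul_assoc]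

end CauchyBinet

section Embeddings

variable {α β : Type*} [Fintype α] [Fintype β] [DecidableEq β]

theorem sum_embedding_map_eq [DecidableEq α] {M : Type*} [AddCommMonoid M] (f : α ↪ β)
    (h : (α ↪ β) → M) :
    ∑ g with univ.map g = univ.map f, h g = ∑ π : Equiv.Perm α, h (π.toEmbedding.trans f) := by
  refine (sum_bij (fun π _ => π.toEmbedding.trans f) (fun π _ => ?_) (fun π₁ _ π₂ _ h => ?_)
    (fun g hg => ?_) fun _ _ => rfl).symm
  · simp only [mem_filter, mem_univ, true_and]
    rw [← Finset.map_map, map_univ_equiv]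
  · exact Equiv.ext fun a => f.injective (DFunLike.congr_fun h a)
  · have hmem : ∀ a, ∃ b, f b = g a := fun a => by
      simpa [(mem_filter.mp hg).2] using mem_map_of_mem g (mem_univ a)
    choose π hπ using hmem
    have hπ_inj : Function.Injective π := fun a b hab => g.injective (by rw [← hπ, ← hπ, hab])
    exact ⟨Equiv.ofBijective π hπ_inj.bijective_of_finite, mem_univ _,
      Function.Embedding.ext hπ⟩

theorem card_embedding_map_eq [DecidableEq α] (f : α ↪ β) :
    #{g : α ↪ β | univ.map g = univ.map f} = (Fintype.card α).factorial := by
  rw [card_eq_sum_ones, sum_embedding_map_eq, sum_const, card_univ, Fintype.card_perm,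
    smul_eq_mul, mul_one]

omit [Fintype β] [DecidableEq β] in
theorem exists_embedding_map_univ_eq {T : Finset β} (hT : #T = Fintype.card α) :
    ∃ f : α ↪ β, univ.map f = T := by
  refine ⟨(Fintype.equivOfCardEq (by rw [Fintype.card_coe, hT])).toEmbedding.trans
    (Function.Embedding.subtype (· ∈ T)), ?_⟩
  rw [← Finset.map_map, map_univ_equiv, univ_eq_attach, attach_map_val]

theorem card_perm_trans_eq (f g : α ↪ β) :
    #{σ : Equiv.Perm β | f.trans σ.toEmbedding = g} =
      (Fintype.card β - Fintype.card α).factorial := by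
  obtain ⟨σ₀, hσ₀⟩ := Equiv.Perm.exists_extending_pair f g f.injective g.injective
  calc #{σ : Equiv.Perm β | f.trans σ.toEmbedding = g}
      = #{τ : Equiv.Perm β | f.trans τ.toEmbedding = f} := by
        refine card_nbij' (σ₀⁻¹ * ·) (σ₀ * ·) (fun σ hσ => ?_) (fun τ hτ => ?_)
          (fun σ _ => by simp) (fun τ _ => by simp)
        · simp_all [Function.Embedding.ext_iff, ← hσ₀]
        · simp_all [Function.Embedding.ext_iff]
    _ = Fintype.card {τ : Equiv.Perm β // ∀ x, ¬ x ∉ univ.map f → τ x = x} := by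
        rw [Fintype.card_subtype]
        refine congrArg card (filter_congr fun τ _ => ?_)
        simp [Function.Embedding.ext_iff]
    _ = (Fintype.card β - Fintype.card α).factorial := by
        rw [← Fintype.card_congr (Equiv.Perm.subtypeEquivSubtypePerm _), Fintype.card_perm,
          Fintype.card_subtype_compl, Fintype.card_coe, card_map, card_univ]

theorem sum_perm_trans_embedding {M : Type*} [AddCommMonoid M] (f : α ↪ β)
    (h : (α ↪ β) → M) :
    ∑ σ : Equiv.Perm β, h (f.trans σ.toEmbedding) =
      (Fintype.card β - Fintype.card α).factorial • ∑ g, h g := by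
  rw [← sum_fiberwise_of_maps_to (t := univ) (g := fun σ => f.trans σ.toEmbedding)
    (fun _ _ => mem_univ _), smul_sum]
  refine sum_congr rfl fun g _ => ?_
  rw [sum_congr rfl fun σ hσ => congrArg h (mem_filter.mp hσ).2, sum_const, card_perm_trans_eq]

variable [DecidableEq α]

omit [Fintype β] in
theorem det_submatrix_embedding (M : Matrix β β R) (u : α ↪ β) :
    det (M.submatrix u u) = det (M.submatrix (Subtype.val : univ.map u → β) Subtype.val) :=
  det_submatrix_equiv_self ((Equiv.subtypeUnivEquiv mem_univ).symm.trans (univ.equivMap u))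
    (M.submatrix (Subtype.val : univ.map u → β) Subtype.val)

theorem sum_det_submatrix_embedding (M : Matrix β β R) :
    ∑ u : α ↪ β, det (M.submatrix u u) =
      (Fintype.card α).factorial * principalMinorSum M (Fintype.card α) := by
  rw [sum_congr rfl fun u _ => det_submatrix_embedding M u,
    ← sum_fiberwise_of_maps_to (t := univ.powersetCard (Fintype.card α))
      (g := fun u => univ.map u) (fun u _ => by simp), principalMinorSum, mul_sum]
  refine sum_congr rfl fun T hT => ?_
  obtain ⟨f, rfl⟩ := exists_embedding_map_univ_eq (mem_powersetCard.mp hT).2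
  rw [sum_congr rfl fun u hu => by rw [(mem_filter.mp hu).2], sum_const, card_embedding_map_eq,
    nsmul_eq_mul]

theorem sum_embedding_map_eq_prod_mul_det (M : Matrix β β R) (V : Matrix β α R) (f : α ↪ β) :
    ∑ g with univ.map g = univ.map f, (∏ i, M (f i) (g i)) * det (V.submatrix g id) =
      det (M.submatrix f f) * det (V.submatrix f id) := by
  rw [sum_embedding_map_eq, ← det_transpose, det_apply', sum_mul]
  refine sum_congr rfl fun π _ => ?_
  have hV : V.submatrix (π.toEmbedding.trans f) id = (V.submatrix f id).submatrix π id := rfl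
  rw [hV, det_permute]
  simp only [transpose_apply, submatrix_apply, Function.Embedding.trans_apply,
    Equiv.toEmbedding_apply]
  ring

end Embeddings

section SignedPermutations

variable {m : ℕ}

theorem sum_prod_sign_mul_prod_sign {β : Type*} [Fintype β] [DecidableEq β] (s t : Finset β) :
    ∑ ε : β → Bool, (∏ j ∈ s, (if ε j then 1 else -1 : R)) * ∏ j ∈ t, (if ε j then 1 else -1)
      = if s = t then 2 ^ Fintype.card β else 0 := by
  let F : β → Bool → R := fun j b =>
    (if j ∈ s then (if b then 1 else -1) else 1) * (if j ∈ t then (if b then 1 else -1) else 1)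
  have hF : ∀ j, ∑ b, F j b = if (j ∈ s ↔ j ∈ t) then 2 else 0 := by
    intro j
    by_cases hs : j ∈ s <;> by_cases ht : j ∈ t <;> simp [F, hs, ht, one_add_one_eq_two]
  calc ∑ ε : β → Bool, (∏ j ∈ s, (if ε j then 1 else -1 : R)) * ∏ j ∈ t, (if ε j then 1 else -1)
      = ∑ ε : β → Bool, ∏ j, F j (ε j) := by
        refine sum_congr rfl fun ε _ => ?_
        simp only [F, prod_mul_distrib, prod_ite_mem, univ_inter]
    _ = if s = t then 2 ^ Fintype.card β else 0 := by
        rw [← Fintype.prod_sum, Fintype.prod_congr _ _ hF, Fintype.prod_ite_zero, prod_const,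
          card_univ]
        exact if_congr Finset.ext_iff.symm rfl rfl

theorem signMatrix_mul_self (ε : Fin m → Bool) : signMatrix R ε * signMatrix R ε = 1 := by
  rw [signMatrix, diagonal_mul_diagonal, ← diagonal_one]
  congr 1 with i
  split_ifs <;> simp

theorem signMatrix_mul_permMatrix_conj (A : Matrix (Fin m) (Fin m) R) (ε : Fin m → Bool)
    (σ : Equiv.Perm (Fin m)) :
    signMatrix R ε * σ.permMatrix R * A * (signMatrix R ε * σ.permMatrix R)⁻¹ =
      signMatrix R ε * A.submatrix σ σ * signMatrix R ε := by
  have hinv : (signMatrix R ε * σ.permMatrix R)⁻¹ = σ⁻¹.permMatrix R * signMatrix R ε := by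
    refine inv_eq_right_inv ?_
    rw [Matrix.mul_assoc, ← Matrix.mul_assoc (σ.permMatrix R), ← permMatrix_mul, inv_mul_cancel,
      permMatrix_one, Matrix.one_mul, signMatrix_mul_self]
  have hconj : σ.permMatrix R * A * σ⁻¹.permMatrix R = A.submatrix σ σ := by
    rw [PEquiv.toMatrix_toPEquiv_mul, PEquiv.mul_toMatrix_toPEquiv]
    rfl
  rw [hinv, ← hconj]
  simp only [Matrix.mul_assoc]

theorem sum_prod_signMatrix_conj_apply {α : Type*} [Fintype α] (M : Matrix (Fin m) (Fin m) R)
    (f g : α ↪ Fin m) :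
    ∑ ε : Fin m → Bool, ∏ i, (signMatrix R ε * M * signMatrix R ε) (f i) (g i) =
      if univ.map g = univ.map f then 2 ^ m * ∏ i, M (f i) (g i) else 0 := by
  have hentry : ∀ ε : Fin m → Bool, ∏ i, (signMatrix R ε * M * signMatrix R ε) (f i) (g i) =
      (∏ j ∈ univ.map g, (if ε j then 1 else -1 : R)) *
        (∏ j ∈ univ.map f, (if ε j then 1 else -1)) * ∏ i, M (f i) (g i) := by
    intro ε
    simp only [signMatrix, mul_diagonal, diagonal_mul, prod_map, ← prod_mul_distrib]
    exact prod_congr rfl fun i _ => by ring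
  simp only [hentry, ← sum_mul, sum_prod_sign_mul_prod_sign, Fintype.card_fin, ite_mul, zero_mul]

variable {α : Type*} [Fintype α] [DecidableEq α]

theorem sum_det_mul_signMatrix_conj_mul (U : Matrix α (Fin m) R) (M : Matrix (Fin m) (Fin m) R)
    (V : Matrix (Fin m) α R) :
    ∑ ε : Fin m → Bool, det (U * (signMatrix R ε * M * signMatrix R ε) * V) =
      2 ^ m * ∑ f : α ↪ Fin m,
        (∏ i, U i (f i)) * det (M.submatrix f f) * det (V.submatrix f id) := by
  simp only [det_mul_mul_eq_sum_embedding]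
  rw [sum_comm, mul_sum]
  refine sum_congr rfl fun f _ => ?_
  rw [sum_comm]
  simp only [← sum_mul, ← mul_sum, sum_prod_signMatrix_conj_apply]
  rw [mul_assoc (∏ i, U i (f i)), ← sum_embedding_map_eq_prod_mul_det, sum_filter, mul_sum,
    mul_sum]
  refine sum_congr rfl fun g _ => ?_
  split_ifs <;> ring

theorem sum_det_submatrix_signMatrix_permMatrix_conj {ν : Type*} [Fintype ν]
    (A : Matrix (Fin m) (Fin m) R) (B : Matrix ν (Fin m) R) (C : Matrix (Fin m) ν R)
    (v : α → ν) :
    ∑ σ : Equiv.Perm (Fin m), ∑ ε : Fin m → Bool,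
      det ((B * (signMatrix R ε * σ.permMatrix R) * A * (signMatrix R ε * σ.permMatrix R)⁻¹ *
        C).submatrix v v) =
      2 ^ m * (m - Fintype.card α).factorial * (Fintype.card α).factorial *
        principalMinorSum A (Fintype.card α) * det ((B * C).submatrix v v) := by
  have hassoc : ∀ P Q : Matrix (Fin m) (Fin m) R, B * P * A * Q * C = B * (P * A * Q) * C := by
    simp only [Matrix.mul_assoc, implies_true]
  have hsub : ∀ W : Matrix (Fin m) (Fin m) R,
      (B * W * C).submatrix v v = B.submatrix v id * W * C.submatrix id v := fun W => by
    rw [submatrix_mul _ _ _ _ _ Function.bijective_id,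
      submatrix_mul _ _ _ _ _ Function.bijective_id, submatrix_id_id]
  have hperm : ∀ f : α ↪ Fin m,
      ∑ σ : Equiv.Perm (Fin m), det ((A.submatrix σ σ).submatrix f f) =
        (m - Fintype.card α).factorial * (Fintype.card α).factorial *
          principalMinorSum A (Fintype.card α) := fun f => by
    refine (sum_perm_trans_embedding f fun u => det (A.submatrix u u)).trans ?_
    rw [sum_det_submatrix_embedding, Fintype.card_fin, nsmul_eq_mul, mul_assoc]
  simp only [hassoc, signMatrix_mul_permMatrix_conj, hsub, sum_det_mul_signMatrix_conj_mul]
  rw [← mul_sum, sum_comm, submatrix_mul _ _ _ _ _ Function.bijective_id,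
    det_mul_eq_sum_embedding, mul_sum, mul_sum]
  refine sum_congr rfl fun f _ => ?_
  rw [← sum_mul, ← mul_sum, hperm]
  ring

theorem sum_principalMinorSum_signMatrix_permMatrix_conj {n : ℕ} (A : Matrix (Fin m) (Fin m) R)
    (B : Matrix (Fin n) (Fin m) R) (C : Matrix (Fin m) (Fin n) R) (k : ℕ) :
    ∑ σ : Equiv.Perm (Fin m), ∑ ε : Fin m → Bool,
      principalMinorSum (B * (signMatrix R ε * σ.permMatrix R) * A *
        (signMatrix R ε * σ.permMatrix R)⁻¹ * C) k =
      2 ^ m * (m - k).factorial * k.factorial * principalMinorSum A k *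
        principalMinorSum (B * C) k := by
  have hminor : ∀ S ∈ univ.powersetCard k, ∑ σ : Equiv.Perm (Fin m), ∑ ε : Fin m → Bool,
      det ((B * (signMatrix R ε * σ.permMatrix R) * A * (signMatrix R ε * σ.permMatrix R)⁻¹ *
        C).submatrix (Subtype.val : S → Fin n) Subtype.val) =
      2 ^ m * (m - k).factorial * k.factorial * principalMinorSum A k *
        det ((B * C).submatrix (Subtype.val : S → Fin n) Subtype.val) := fun S hS => by
    rw [sum_det_submatrix_signMatrix_permMatrix_conj, Fintype.card_coe, (mem_powersetCard.mp hS).2]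
  unfold principalMinorSum
  rw [(sum_congr rfl fun σ _ => sum_comm).trans sum_comm, sum_congr rfl hminor, ← mul_sum]
  rfl

end SignedPermutations

end

theorem coeff_sum_det_conj_mul
    {K : Type*} [CommRing K] {m n : ℕ}
    (A : Matrix (Fin m) (Fin m) K) (B : Matrix (Fin n) (Fin m) K)
    (C : Matrix (Fin m) (Fin n) K) (p q r : ℕ → K)
    (hp : ((X : K[X]) • (1 : Matrix (Fin n) (Fin n) K[X]) + (B * C).map Polynomial.C).det
        = ∑ i ∈ Finset.range (n + 1), X ^ (n - i) * Polynomial.C (p i))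
    (hq : ((X : K[X]) • (1 : Matrix (Fin m) (Fin m) K[X]) + A.map Polynomial.C).det
        = ∑ i ∈ Finset.range (m + 1), X ^ (m - i) * Polynomial.C (q i))
    (hr : (∑ σ : Equiv.Perm (Fin m), ∑ ε : Fin m → Bool,
          ((X : K[X]) • (1 : Matrix (Fin n) (Fin n) K[X]) +
            (B * (signMatrix K ε * σ.permMatrix K) * A *
              (signMatrix K ε * σ.permMatrix K)⁻¹ * C).map Polynomial.C).det)
        = ∑ i ∈ Finset.range (n + 1), X ^ (n - i) * Polynomial.C (r i)) :
    ∀ k, k ≤ n → k ≤ m →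
      r k = (2 ^ m * k.factorial * (m - k).factorial : ℕ) * p k * q k := by
  intro k hkn hkm
  have hcoeff : ∀ {s : ℕ} (M : Matrix (Fin s) (Fin s) K), k ≤ s →
      ((X : K[X]) • (1 : Matrix (Fin s) (Fin s) K[X]) + M.map Polynomial.C).det.coeff (s - k) =
        principalMinorSum M k := fun M hk => by
    simpa using coeff_det_X_smul_one_add_map M (k := k) (by simpa using hk)
  have hpk : p k = principalMinorSum (B * C) k := by
    rw [← coeff_sum_X_pow_sub_mul_C p hkn, ← hp, hcoeff _ hkn]
  have hqk : q k = principalMinorSum A k := by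
    rw [← coeff_sum_X_pow_sub_mul_C q hkm, ← hq, hcoeff _ hkm]
  have hrk : r k = ∑ σ : Equiv.Perm (Fin m), ∑ ε : Fin m → Bool,
      principalMinorSum (B * (signMatrix K ε * σ.permMatrix K) * A *
        (signMatrix K ε * σ.permMatrix K)⁻¹ * C) k := by
    rw [← coeff_sum_X_pow_sub_mul_C r hkn, ← hr, finsetSum_coeff]
    refine Finset.sum_congr rfl fun σ _ => ?_
    rw [finsetSum_coeff]
    exact Finset.sum_congr rfl fun ε _ => hcoeff _ hkn
  rw [hrk, sum_principalMinorSum_signMatrix_permMatrix_conj, hpk, hqk]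
  push_cast
  ring
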